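/- arXiv:math/0103207 — 5 statements merged into one kernel-verified Lean document; each statement's English description precedes it below -/
import Mathlib

section
/- As formal power series with rational coefficients, S_u(1 + x/2) = Σ_{k≥0} C(u+k+1, 2k+1) x^k, where C denotes the binomial coefficient polynomial in u. -/
open Polynomial Polynomial.Chebyshev

lemma twoX_comp_aux : (2 * X : ℚ[X]).comp (1 + Polynomial.C (2⁻¹ : ℚ) * Polynomial.X)
    = Polynomial.C 2 + Polynomial.X := by
  have h2C : (2 : ℚ[X]) = Polynomial.C 2 := (map_ofNat Polynomial.C 2).symm
  simp only [Polynomial.mul_comp, Polynomial.X_comp, Polynomial.ofNat_comp, mul_add, mul_one,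
    Nat.cast_ofNat]
  rw [h2C, ← mul_assoc, ← Polynomial.C_mul]
  norm_num

lemma choose_pascal_aux (m r : ℕ) :
    (m + 2).choose (r + 2) + m.choose (r + 2)
      = 2 * (m + 1).choose (r + 2) + m.choose r := by
  rw [show m + 2 = (m + 1) + 1 by ring, show r + 2 = (r + 1) + 1 by ring,
    Nat.choose_succ_succ (m + 1) (r + 1), Nat.choose_succ_succ m r,
    Nat.choose_succ_succ m (r + 1)]
  ring

/-- As formal power series (equivalently, coefficientwise as polynomials), the Chebyshev
polynomial of the second kind satisfies `S_u(1 + x/2) = Σ_{k ≥ 0} C(u+k+1, 2k+1) x^k`.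
Since each coefficient is a polynomial in `u`, it suffices to state the identity for all
nonnegative integers `u`: the `k`-th coefficient of `S_u(1 + X/2)` is the binomial
coefficient `(u+k+1).choose (2k+1)`. -/
theorem chebyshevU_comp_one_add_half_X_coeff (u k : ℕ) :
    ((U ℚ (u : ℤ)).comp (1 + Polynomial.C (2⁻¹ : ℚ) * Polynomial.X)).coeff k =
      ((u + k + 1).choose (2 * k + 1) : ℚ) := by
  induction u using Nat.strong_induction_on generalizing k with
  | _ u ih =>
    match u with
    | 0 =>
      simp only [Nat.cast_zero, U_zero, Polynomial.one_comp, Polynomial.coeff_one]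
      rcases k with _ | k
      · simp
      · rw [Nat.choose_eq_zero_of_lt (by omega)]
        simp
    | 1 =>
      have h1 : ((1 : ℕ) : ℤ) = 1 := by norm_num
      rw [h1, U_one, twoX_comp_aux]
      rcases k with _ | _ | k
      · simp
      · simp
      · rw [Nat.choose_eq_zero_of_lt (by omega)]
        simp [Polynomial.coeff_X]
    | (n + 2) =>
      have hc : ((n + 2 : ℕ) : ℤ) = (n : ℤ) + 2 := by push_cast; ring
      rw [hc, U_add_two]
      have hc1 : ((n : ℤ) + 1) = ((n + 1 : ℕ) : ℤ) := by push_cast; ring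
      rw [hc1]
      set f : ℚ[X] := 1 + Polynomial.C (2⁻¹ : ℚ) * Polynomial.X with hf
      have h2 : ((2 * X * U ℚ ((n + 1 : ℕ) : ℤ) - U ℚ (n : ℤ)).comp f).coeff k
          = ((Polynomial.C 2 + X) * (U ℚ ((n + 1 : ℕ) : ℤ)).comp f).coeff k
            - ((U ℚ (n : ℤ)).comp f).coeff k := by
        rw [Polynomial.sub_comp, Polynomial.mul_comp, hf, twoX_comp_aux,
          Polynomial.coeff_sub]
      rw [h2, add_mul, Polynomial.coeff_add, Polynomial.coeff_C_mul]
      rcases k with _ | k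
      · rw [Polynomial.mul_coeff_zero]
        simp only [Polynomial.coeff_X_zero, zero_mul, add_zero]
        rw [ih (n + 1) (by omega) 0, ih n (by omega) 0]
        push_cast [Nat.choose_one_right]
        ring
      · rw [Polynomial.coeff_X_mul, ih (n + 1) (by omega) (k + 1), ih (n + 1) (by omega) k,
          ih n (by omega) (k + 1)]
        have hp := choose_pascal_aux (n + k + 2) (2 * k + 1)
        have hq : ((n + k + 4).choose (2 * k + 3) : ℚ) + ((n + k + 2).choose (2 * k + 3) : ℚ)
            = 2 * ((n + k + 3).choose (2 * k + 3) : ℚ)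
              + ((n + k + 2).choose (2 * k + 1) : ℚ) := by
          exact_mod_cast congrArg (Nat.cast : ℕ → ℚ)
            (by convert hp using 3)
        have e1 : n + 1 + (k + 1) + 1 = n + k + 3 := by ring
        have e2 : n + 1 + k + 1 = n + k + 2 := by ring
        have e3 : n + (k + 1) + 1 = n + k + 2 := by ring
        have e4 : n + 2 + (k + 1) + 1 = n + k + 4 := by ring
        have e5 : 2 * (k + 1) + 1 = 2 * k + 3 := by ring
        rw [e1, e2, e3, e4, e5]
        linarith [hq]
end

section
/- Let p be an odd prime, k a field of characteristic p, V a finite-dimensional F_p-subspace of k of dimension t, and M the 3-dimensional k-vector space with basis {1, x, x²} on which each u ∈ V acts by (a₀ + a₁x + a₂x²)^u = a₀ + (a₁ - 2u a₀)x + (a₂ - u a₁ + u² a₀)x². Then a map d: V → M, written du = a₀(u) + a₁(u)x + a₂(u)x², satisfies the cocycle condition d(u+v) = du + (dv)^u for all u, v ∈ V if and only if there exist constants a₀, a₁ ∈ k (with a₀ = 0 when p=3) such that a₀(u) = u a₀, a₁(u) = u(a₁ - u a₀), and a₂(u+v) = a₂(u) + a₂(v) + uv[(u+v)a₀ - a₁]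 for all u, v ∈ V. -/
/-- The action of `u ∈ k` on `M = k ⊕ kx ⊕ kx²` (coordinates indexed by `Fin 3`),
given by the matrix `Φ(u) = [[1,0,0],[-2u,1,0],[u²,-u,1]]`:
`(a₀ + a₁x + a₂x²)^u = a₀ + (a₁ - 2u a₀)x + (a₂ - u a₁ + u² a₀)x²`. -/
def phiAct {k : Type*} [Field k] (u : k) (a : Fin 3 → k) : Fin 3 → k :=
  ![a 0, a 1 - 2 * u * a 0, a 2 - u * a 1 + u ^ 2 * a 0]

/-- Let `p` be an odd prime, `k` a field of characteristic `p`, `V` an `F_p`-subspace of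
`k`, and let `V` act on `M = k ⊕ kx ⊕ kx²` via `Φ`. A map `d : V → M`, with components
`a₀(u), a₁(u), a₂(u)`, is a 1-cocycle (i.e. `d(u+v) = du + (dv)^u` for all `u, v ∈ V`)
if and only if there are constants `c₀, c₁ ∈ k` (with `c₀ = 0` when `p = 3`) such that
`a₀(u) = u·c₀`, `a₁(u) = u(c₁ - u·c₀)` and
`a₂(u+v) = a₂(u) + a₂(v) + uv[(u+v)c₀ - c₁]` for all `u, v ∈ V`. -/
theorem cocycle_iff_of_odd_char (p : ℕ) (hp : p.Prime) (hodd : Odd p)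
    (k : Type*) [Field k] [CharP k p] [Algebra (ZMod p) k]
    (V : Submodule (ZMod p) k) (d : V → Fin 3 → k) :
    (∀ u v : V, d (u + v) = d u + phiAct (u : k) (d v)) ↔
      ∃ c₀ c₁ : k, (p = 3 → c₀ = 0) ∧
        (∀ u : V, d u 0 = (u : k) * c₀) ∧
        (∀ u : V, d u 1 = (u : k) * (c₁ - (u : k) * c₀)) ∧
        (∀ u v : V, d (u + v) 2 =
          d u 2 + d v 2 + (u : k) * (v : k) * (((u : k) + (v : k)) * c₀ - c₁)) := by
  have hp2 : p ≠ 2 := by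
    rintro rfl
    exact (Nat.not_odd_iff_even.mpr even_two) hodd
  have h2k : (2 : k) ≠ 0 := by
    intro h
    have hdvd : p ∣ 2 := (CharP.cast_eq_zero_iff k p 2).mp (by exact_mod_cast h)
    exact hp2 ((Nat.prime_dvd_prime_iff_eq hp Nat.prime_two).mp hdvd)
  constructor
  · intro H
    have h0 : ∀ u v : V, d (u + v) 0 = d u 0 + d v 0 := by
      intro u v
      have := congrFun (H u v) 0
      simpa [phiAct] using this
    have h1 : ∀ u v : V, d (u + v) 1 = d u 1 + (d v 1 - 2 * (u : k) * d v 0) := by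
      intro u v
      have := congrFun (H u v) 1
      simpa [phiAct] using this
    have h2 : ∀ u v : V, d (u + v) 2
        = d u 2 + (d v 2 - (u : k) * d v 1 + (u : k) ^ 2 * d v 0) := by
      intro u v
      have := congrFun (H u v) 2
      simpa [phiAct] using this
    have hd00 : d 0 0 = 0 := by have := h0 0 0; simpa using this
    have hd01 : d 0 1 = 0 := by have := h1 0 0; simpa using this
    have hd02 : d 0 2 = 0 := by have := h2 0 0; simpa using this
    have hsym0 : ∀ u v : V, (u : k) * d v 0 = (v : k) * d u 0 := by
      intro u v
      have e1 := h1 u v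
      have e2 := h1 v u
      rw [add_comm v u] at e2
      have h := e1.symm.trans e2
      have h2' : (2 : k) * ((u : k) * d v 0) = 2 * ((v : k) * d u 0) := by
        linear_combination -h
      exact mul_left_cancel₀ h2k h2'
    have hsym1 : ∀ u v : V, (u : k) * d v 1 - (u : k) ^ 2 * d v 0
        = (v : k) * d u 1 - (v : k) ^ 2 * d u 0 := by
      intro u v
      have e1 := h2 u v
      have e2 := h2 v u
      rw [add_comm v u] at e2
      linear_combination e1 - e2
    by_cases hV : ∃ w : V, (w : k) ≠ 0
    · obtain ⟨w, hw⟩ := hV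
      have hinv : (w : k) * (w : k)⁻¹ = 1 := mul_inv_cancel₀ hw
      set c₀ : k := (w : k)⁻¹ * d w 0 with hc₀
      set c₁ : k := (w : k)⁻¹ * d w 1 + (w : k) * c₀ with hc₁
      have ha0 : ∀ u : V, d u 0 = (u : k) * c₀ := by
        intro u
        rw [hc₀]
        linear_combination (-(w : k)⁻¹) * hsym0 u w - d u 0 * hinv
      have ha1 : ∀ u : V, d u 1 = (u : k) * (c₁ - (u : k) * c₀) := by
        intro u
        rw [hc₁, hc₀]
        linear_combination (-(w : k)⁻¹) * hsym1 u w - d u 1 * hinv -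
          (w : k)⁻¹ * (w : k) * hsym0 u w
      have hA2 : ∀ u v : V, d (u + v) 2 =
          d u 2 + d v 2 + (u : k) * (v : k) * (((u : k) + (v : k)) * c₀ - c₁) := by
        intro u v
        rw [h2 u v, ha1 v, ha0 v]
        ring
      refine ⟨c₀, c₁, ?_, ha0, ha1, hA2⟩
      intro hp3
      subst hp3
      have h3k : (3 : k) = 0 := by
        have := CharP.cast_eq_zero k 3
        exact_mod_cast this
      have h3w : w + w + w = (0 : V) := by
        apply Subtype.ext
        push_cast
        linear_combination (w : k) * h3k
      have e1 := hA2 w w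
      have e2 := hA2 (w + w) w
      rw [h3w] at e2
      push_cast at e1 e2
      have h8 : (8 : k) * (w : k) ^ 3 * c₀ = 0 := by
        linear_combination hd02 - e2 - e1 + ((w : k) ^ 2 * c₁ - d w 2) * h3k
      have h8ne : (8 : k) * (w : k) ^ 3 ≠ 0 := by
        have : (8 : k) = 2 ^ 3 := by norm_num
        exact mul_ne_zero (this ▸ pow_ne_zero _ h2k) (pow_ne_zero _ hw)
      exact (mul_eq_zero.mp h8).resolve_left h8ne
    · push_neg at hV
      refine ⟨0, 0, fun _ => rfl, ?_, ?_, ?_⟩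
      · intro u
        have : u = 0 := Subtype.ext (hV u)
        rw [this, hd00]; ring
      · intro u
        have : u = 0 := Subtype.ext (hV u)
        rw [this, hd01]; ring
      · intro u v
        have hu : u = 0 := Subtype.ext (hV u)
        have hv : v = 0 := Subtype.ext (hV v)
        rw [hu, hv]
        simp [hd02]
  · rintro ⟨c₀, c₁, -, ha0, ha1, hA2⟩
    intro u v
    funext i
    fin_cases i
    · show d (u + v) 0 = (d u + phiAct (u : k) (d v)) 0
      simp only [Pi.add_apply, phiAct, Matrix.cons_val_zero]
      rw [ha0, ha0, ha0]; push_cast; ring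
    · show d (u + v) 1 = (d u + phiAct (u : k) (d v)) 1
      simp only [Pi.add_apply, phiAct, Matrix.cons_val_one, Matrix.head_cons]
      rw [ha1, ha1, ha1, ha0]; push_cast; ring
    · show d (u + v) 2 = (d u + phiAct (u : k) (d v)) 2
      simp only [Pi.add_apply, phiAct, Matrix.cons_val_two, Matrix.tail_cons, Matrix.head_cons]
      rw [hA2 u v, ha1 v, ha0 v]; ring
end

section
/- The untruncated formal Chebyshev matrices satisfy the group law M_α^{[∞]}(u)·M_α^{[∞]}(v) = M_α^{[∞]}(u+v) and det M_α^{[∞]}(u) = 1, as identities of formal power series in u, v, α over Q. -/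
open Finset

abbrev QuvRing : Type := MvPolynomial (Fin 2) ℚ

noncomputable def polyChoose (m : QuvRing) (j : ℕ) : QuvRing :=
  ((j.factorial : ℚ)⁻¹) • ∏ i ∈ range j, (m - (i : QuvRing))

noncomputable def chebSeriesAux (w : QuvRing) : PowerSeries QuvRing :=
  PowerSeries.mk fun k => polyChoose (w + (k : QuvRing)) (2 * k + 1)

noncomputable def chebSeries (w : QuvRing) : PowerSeries QuvRing :=
  PowerSeries.mk fun k => polyChoose (w + (k : QuvRing) + 1) (2 * k + 1)

noncomputable def chebMatrixInf (w : QuvRing) : Matrix (Fin 2) (Fin 2) (PowerSeries QuvRing) :=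
  !![chebSeries w - (1 + PowerSeries.X) * chebSeriesAux w, PowerSeries.X * chebSeriesAux w;
     chebSeriesAux w, chebSeries w - chebSeriesAux w]

/- ## rational binomial coefficients and the scalar Chebyshev series -/

noncomputable def qchoose (r : ℚ) (j : ℕ) : ℚ :=
  (j.factorial : ℚ)⁻¹ * ∏ i ∈ range j, (r - (i : ℚ))

noncomputable def NN (r : ℚ) : PowerSeries ℚ :=
  PowerSeries.mk fun k => qchoose (r + k) (2 * k + 1)

lemma qchoose_succ (r : ℚ) (j : ℕ) :
    qchoose (r + 1) (j + 1) = qchoose r (j + 1) + qchoose r j := by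
  have h1 : ∏ i ∈ range (j + 1), (r + 1 - (i : ℚ)) = (r + 1) * ∏ i ∈ range j, (r - (i : ℚ)) := by
    rw [Finset.prod_range_succ']
    have : ∀ i ∈ range j, (r + 1 - ((i + 1 : ℕ) : ℚ)) = r - i := by
      intro i _; push_cast; ring
    rw [Finset.prod_congr rfl this]
    push_cast; ring
  have h2 : ∏ i ∈ range (j + 1), (r - (i : ℚ)) = (∏ i ∈ range j, (r - (i : ℚ))) * (r - j) :=
    Finset.prod_range_succ _ _
  have hj : (j.factorial : ℚ) ≠ 0 := by exact_mod_cast j.factorial_ne_zero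
  have hj1 : (((j + 1).factorial : ℕ) : ℚ) = (j + 1) * (j.factorial : ℚ) := by
    rw [Nat.factorial_succ]; push_cast; ring
  unfold qchoose
  rw [h1, h2, hj1]
  have hj2 : ((j : ℚ) + 1) ≠ 0 := by positivity
  field_simp
  ring

lemma qchoose_nat_lt (n j : ℕ) (h : n < j) : qchoose (n : ℚ) j = 0 := by
  unfold qchoose
  rw [Finset.prod_eq_zero (Finset.mem_range.2 h) (by simp)]
  simp

lemma NN_zero : NN 0 = 0 := by
  ext k
  simp only [NN, PowerSeries.coeff_mk, zero_add, map_zero]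
  exact qchoose_nat_lt k (2 * k + 1) (by omega)

lemma NN_one : NN 1 = 1 := by
  ext k
  cases k with
  | zero => simp [NN, qchoose]
  | succ k =>
      have : ((1 : ℚ) + ((k + 1 : ℕ) : ℚ)) = ((k + 2 : ℕ) : ℚ) := by push_cast; ring
      simp only [NN, PowerSeries.coeff_mk, this, PowerSeries.coeff_one]
      rw [qchoose_nat_lt (k + 2) (2 * (k + 1) + 1) (by omega)]
      simp

lemma coeff_NN (t : ℚ) (k : ℕ) :
    (PowerSeries.coeff (R := ℚ) k) (NN t) = qchoose (t + k) (2 * k + 1) := by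
  simp [NN]

lemma NN_rec (r : ℚ) :
    NN (r + 2) + NN r = (2 + PowerSeries.X) * NN (r + 1) := by
  have expand : (2 + PowerSeries.X) * NN (r + 1)
      = (NN (r + 1) + NN (r + 1)) + PowerSeries.X * NN (r + 1) := by ring
  ext k
  rw [expand, map_add, map_add, map_add, coeff_NN, coeff_NN, coeff_NN]
  cases k with
  | zero =>
      rw [PowerSeries.coeff_zero_eq_constantCoeff, map_mul, PowerSeries.constantCoeff_X]
      simp [qchoose]
      ring
  | succ k =>
      rw [PowerSeries.coeff_succ_X_mul, coeff_NN]
      push_cast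
      rw [show r + 2 + ((k : ℚ) + 1) = (r + (k : ℚ) + 1) + 1 + 1 by ring,
          show r + ((k : ℚ) + 1) = (r + (k : ℚ) + 1) by ring,
          show r + 1 + ((k : ℚ) + 1) = (r + (k : ℚ) + 1) + 1 by ring,
          show r + 1 + (k : ℚ) = (r + (k : ℚ) + 1) by ring,
          show 2 * (k + 1) + 1 = 2 * k + 2 + 1 from by omega]
      set s : ℚ := r + (k : ℚ) + 1 with hs
      have e1 := qchoose_succ (s + 1) (2 * k + 2)
      have e2 := qchoose_succ s (2 * k + 2)
      have e3 := qchoose_succ s (2 * k + 1)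
      rw [show 2 * k + 1 + 1 = 2 * k + 2 from by omega] at e3
      linear_combination e1 - e2 + e3

lemma NN_two : NN 2 = 2 + PowerSeries.X := by
  have h := NN_rec 0
  rw [NN_zero] at h
  norm_num [NN_one] at h
  linear_combination h

lemma lemA (a b : ℕ) :
    NN ((a : ℚ) + 1) * NN ((b : ℚ) + 1) = NN ((a : ℚ) + (b : ℚ) + 1) + NN (a : ℚ) * NN (b : ℚ) := by
  induction a using Nat.twoStepInduction with
  | zero => norm_num [NN_zero, NN_one]
  | one =>
      norm_num [NN_one, NN_two]
      rw [show (1 : ℚ) + (b : ℚ) + 1 = (b : ℚ) + 2 by ring]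
      linear_combination -NN_rec (b : ℚ)
  | more n ih1 ih2 =>
      push_cast
      have r1 := NN_rec ((n : ℚ) + 1)
      have r2 := NN_rec ((n : ℚ) + (b : ℚ) + 1)
      have r3 := NN_rec (n : ℚ)
      rw [show ((n : ℚ) + 1 + 2) = (n : ℚ) + 3 by ring, show ((n : ℚ) + 1 + 1) = (n : ℚ) + 2 by ring] at r1
      rw [show ((n : ℚ) + (b : ℚ) + 1 + 2) = (n : ℚ) + (b : ℚ) + 3 by ring,
          show ((n : ℚ) + (b : ℚ) + 1 + 1) = (n : ℚ) + (b : ℚ) + 2 by ring] at r2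
      push_cast at ih1 ih2
      rw [show ((n : ℚ) + 1 + 1) = (n : ℚ) + 2 by ring,
          show ((n : ℚ) + 1 + (b : ℚ) + 1) = (n : ℚ) + (b : ℚ) + 2 by ring] at ih2
      rw [show ((n : ℚ) + 2 + 1) = (n : ℚ) + 3 by ring, show ((n : ℚ) + 2 + (b : ℚ) + 1) = (n : ℚ) + (b : ℚ) + 3 by ring]
      linear_combination (2 + PowerSeries.X) * ih2 - ih1 + NN ((b : ℚ) + 1) * r1 - r2 - NN (b : ℚ) * r3

lemma lemB (a b : ℕ) :
    NN (a : ℚ) * NN ((b : ℚ) + 1) + NN ((a : ℚ) + 1) * NN (b : ℚ)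
      = NN ((a : ℚ) + (b : ℚ)) + (2 + PowerSeries.X) * (NN (a : ℚ) * NN (b : ℚ)) := by
  induction a using Nat.twoStepInduction with
  | zero => norm_num [NN_zero, NN_one]
  | one =>
      norm_num [NN_one, NN_two]
      rw [show (1 : ℚ) + (b : ℚ) = (b : ℚ) + 1 by ring]
  | more n ih1 ih2 =>
      push_cast
      have r1 := NN_rec ((n : ℚ) + 1)
      have r2 := NN_rec ((n : ℚ) + (b : ℚ))
      have r3 := NN_rec (n : ℚ)
      rw [show ((n : ℚ) + 1 + 2) = (n : ℚ) + 3 by ring, show ((n : ℚ) + 1 + 1) = (n : ℚ) + 2 by ring] at r1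
      push_cast at ih1 ih2
      rw [show ((n : ℚ) + 1 + 1) = (n : ℚ) + 2 by ring,
          show ((n : ℚ) + 1 + (b : ℚ)) = (n : ℚ) + (b : ℚ) + 1 by ring] at ih2
      rw [show ((n : ℚ) + 2 + 1) = (n : ℚ) + 3 by ring, show ((n : ℚ) + 2 + (b : ℚ)) = (n : ℚ) + (b : ℚ) + 2 by ring]
      linear_combination (2 + PowerSeries.X) * ih2 - ih1 + NN ((b : ℚ) + 1) * r3 + NN (b : ℚ) * r1 - r2
        - (2 + PowerSeries.X) * NN (b : ℚ) * r3

lemma lemC (a : ℕ) :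
    NN ((a : ℚ) + 1) ^ 2 + NN (a : ℚ) ^ 2
      = 1 + (2 + PowerSeries.X) * (NN ((a : ℚ) + 1) * NN (a : ℚ)) := by
  induction a with
  | zero => norm_num [NN_zero, NN_one]
  | succ n ih =>
      push_cast
      have r := NN_rec (n : ℚ)
      push_cast at ih
      rw [show ((n : ℚ) + 1 + 1) = (n : ℚ) + 2 by ring]
      linear_combination ih + (NN ((n:ℚ)+2) - NN (n:ℚ)) * r

/- ## evaluation at rational points -/

noncomputable def evab (a b : ℚ) : QuvRing →+* ℚ := MvPolynomial.eval ![a, b]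

lemma nat_dense {p q : QuvRing}
    (h : ∀ a b : ℕ, evab (a : ℚ) (b : ℚ) p = evab (a : ℚ) (b : ℚ) q) : p = q := by
  have key1 : ∀ (a : ℕ) (y : ℚ), evab (a : ℚ) y p = evab (a : ℚ) y q := by
    intro a y
    set φ : QuvRing →+* Polynomial ℚ :=
      MvPolynomial.eval₂Hom Polynomial.C ![Polynomial.C (a : ℚ), Polynomial.X] with hφ
    have hcomp : ∀ (c : ℚ) (r : QuvRing), Polynomial.eval c (φ r) = evab (a : ℚ) c r := by
      intro c r
      have hh : (Polynomial.evalRingHom c).comp φ = evab (a : ℚ) c := by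
        apply MvPolynomial.ringHom_ext
        · intro s; simp [hφ, evab]
        · intro i; fin_cases i <;> simp [hφ, evab]
      exact RingHom.congr_fun hh r
    have hzero : φ p - φ q = 0 := by
      apply Polynomial.eq_zero_of_infinite_isRoot
      apply Set.infinite_of_injective_forall_mem (f := (Nat.cast : ℕ → ℚ)) Nat.cast_injective
      intro b
      simp only [Set.mem_setOf_eq, Polynomial.IsRoot, Polynomial.eval_sub, hcomp]
      rw [h a b, sub_self]
    have heq := sub_eq_zero.mp hzero
    rw [← hcomp y p, ← hcomp y q, heq]
  apply MvPolynomial.funext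
  intro x
  have key2 : ∀ (z : ℚ), evab z (x 1) p = evab z (x 1) q := by
    intro z
    set ψ : QuvRing →+* Polynomial ℚ :=
      MvPolynomial.eval₂Hom Polynomial.C ![Polynomial.X, Polynomial.C (x 1)] with hψ
    have hcomp : ∀ (c : ℚ) (r : QuvRing), Polynomial.eval c (ψ r) = evab c (x 1) r := by
      intro c r
      have hh : (Polynomial.evalRingHom c).comp ψ = evab c (x 1) := by
        apply MvPolynomial.ringHom_ext
        · intro s; simp [hψ, evab]
        · intro i; fin_cases i <;> simp [hψ, evab]
      exact RingHom.congr_fun hh r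
    have hzero : ψ p - ψ q = 0 := by
      apply Polynomial.eq_zero_of_infinite_isRoot
      apply Set.infinite_of_injective_forall_mem (f := (Nat.cast : ℕ → ℚ)) Nat.cast_injective
      intro a
      simp only [Set.mem_setOf_eq, Polynomial.IsRoot, Polynomial.eval_sub, hcomp]
      rw [key1 a (x 1), sub_self]
    have heq := sub_eq_zero.mp hzero
    rw [← hcomp z p, ← hcomp z q, heq]
  have hx : x = ![x 0, x 1] := by funext i; fin_cases i <;> rfl
  calc MvPolynomial.eval x p = evab (x 0) (x 1) p := by rw [evab]; rw [← hx]
    _ = evab (x 0) (x 1) q := key2 (x 0)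
    _ = MvPolynomial.eval x q := by rw [evab]; rw [← hx]

lemma psExt {f g : PowerSeries QuvRing}
    (h : ∀ a b : ℕ, PowerSeries.map (evab (a : ℚ) (b : ℚ)) f
      = PowerSeries.map (evab (a : ℚ) (b : ℚ)) g) : f = g := by
  apply PowerSeries.ext
  intro n
  apply nat_dense
  intro a b
  have hc := congrArg (PowerSeries.coeff (R := ℚ) n) (h a b)
  simpa [PowerSeries.coeff_map] using hc

lemma evab_polyChoose (a b : ℚ) (m : QuvRing) (j : ℕ) :
    evab a b (polyChoose m j) = qchoose (evab a b m) j := by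
  unfold polyChoose qchoose
  rw [MvPolynomial.smul_eq_C_mul, map_mul, map_prod]
  simp [evab]

lemma map_chebSeriesAux (a b : ℚ) (w : QuvRing) :
    PowerSeries.map (evab a b) (chebSeriesAux w) = NN (evab a b w) := by
  ext k
  rw [PowerSeries.coeff_map, coeff_NN]
  simp only [chebSeriesAux, PowerSeries.coeff_mk]
  rw [evab_polyChoose]
  congr 1
  simp

lemma map_chebSeries (a b : ℚ) (w : QuvRing) :
    PowerSeries.map (evab a b) (chebSeries w) = NN (evab a b w + 1) := by
  ext k
  rw [PowerSeries.coeff_map, coeff_NN]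
  simp only [chebSeries, PowerSeries.coeff_mk]
  rw [evab_polyChoose]
  congr 1
  push_cast [map_add, map_natCast, map_one]
  ring

lemma evab_X0 (a b : ℚ) : evab a b (MvPolynomial.X 0) = a := by simp [evab]
lemma evab_X1 (a b : ℚ) : evab a b (MvPolynomial.X 1) = b := by simp [evab]

/- ## master identities over `QuvRing` -/

lemma master_A :
    chebSeries (MvPolynomial.X 0) * chebSeries (MvPolynomial.X 1)
      = chebSeries (MvPolynomial.X 0 + MvPolynomial.X 1)
        + chebSeriesAux (MvPolynomial.X 0) * chebSeriesAux (MvPolynomial.X 1) := by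
  apply psExt; intro a b
  simp only [map_mul, map_add, map_chebSeriesAux, map_chebSeries, evab_X0, evab_X1]
  exact lemA a b

lemma master_B :
    chebSeriesAux (MvPolynomial.X 0) * chebSeries (MvPolynomial.X 1)
      + chebSeries (MvPolynomial.X 0) * chebSeriesAux (MvPolynomial.X 1)
      = chebSeriesAux (MvPolynomial.X 0 + MvPolynomial.X 1)
        + (2 + PowerSeries.X)
          * (chebSeriesAux (MvPolynomial.X 0) * chebSeriesAux (MvPolynomial.X 1)) := by
  apply psExt; intro a b
  simp only [map_mul, map_add, map_chebSeriesAux, map_chebSeries, evab_X0, evab_X1,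
    PowerSeries.map_X, map_ofNat]
  exact lemB a b

lemma master_C :
    chebSeries (MvPolynomial.X 0) ^ 2 + chebSeriesAux (MvPolynomial.X 0) ^ 2
      = 1 + (2 + PowerSeries.X)
          * (chebSeries (MvPolynomial.X 0) * chebSeriesAux (MvPolynomial.X 0)) := by
  apply psExt; intro a b
  simp only [map_mul, map_add, map_pow, map_one, map_chebSeriesAux, map_chebSeries,
    evab_X0, PowerSeries.map_X, map_ofNat]
  exact lemC a

/-- The untruncated formal Chebyshev matrices satisfy the group law
`M_α^{[∞]}(u)·M_α^{[∞]}(v) = M_α^{[∞]}(u+v)` and `det M_α^{[∞]}(u) = 1`, as identities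
of formal power series in `u, v, α` over `ℚ`. -/
theorem chebMatrixInf_mul_and_det :
    chebMatrixInf (MvPolynomial.X 0) * chebMatrixInf (MvPolynomial.X 1) =
        chebMatrixInf (MvPolynomial.X 0 + MvPolynomial.X 1) ∧
      (chebMatrixInf (MvPolynomial.X 0)).det = 1 := by
  set U : QuvRing := MvPolynomial.X 0 with hU
  set V : QuvRing := MvPolynomial.X 1 with hV
  have h00 : (chebSeries U - (1 + PowerSeries.X) * chebSeriesAux U)
        * (chebSeries V - (1 + PowerSeries.X) * chebSeriesAux V)
        + PowerSeries.X * chebSeriesAux U * chebSeriesAux V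
      = chebSeries (U + V) - (1 + PowerSeries.X) * chebSeriesAux (U + V) := by
    linear_combination master_A - (1 + PowerSeries.X) * master_B
  have h01 : (chebSeries U - (1 + PowerSeries.X) * chebSeriesAux U)
        * (PowerSeries.X * chebSeriesAux V)
        + PowerSeries.X * chebSeriesAux U * (chebSeries V - chebSeriesAux V)
      = PowerSeries.X * chebSeriesAux (U + V) := by
    linear_combination PowerSeries.X * master_B
  have h10 : chebSeriesAux U * (chebSeries V - (1 + PowerSeries.X) * chebSeriesAux V)
        + (chebSeries U - chebSeriesAux U) * chebSeriesAux V
      = chebSeriesAux (U + V) := by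
    linear_combination master_B
  have h11 : chebSeriesAux U * (PowerSeries.X * chebSeriesAux V)
        + (chebSeries U - chebSeriesAux U) * (chebSeries V - chebSeriesAux V)
      = chebSeries (U + V) - chebSeriesAux (U + V) := by
    linear_combination master_A - master_B
  constructor
  · rw [chebMatrixInf, chebMatrixInf, chebMatrixInf, Matrix.mul_fin_two, h00, h01, h10, h11]
  · rw [chebMatrixInf, Matrix.det_fin_two_of]
    linear_combination master_C
end

section
/- Let n be a positive integer, p a prime and t ≥ 1. If (n-1)p^t + 2 divides 2 n p^t and n divides p^t - 1, then n = 1. -/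
/-- The arithmetic step from Hurwitz's formula: if `p` is prime, `t ≥ 1`, `n > 0`,
`(n-1)·p^t + 2` divides `2·n·p^t` and `n` divides `p^t - 1`, then `n = 1`. -/
theorem hurwitz_arith (p t n : ℕ) (hp : p.Prime) (ht : 1 ≤ t) (hn : 0 < n)
    (hdvd : ((n - 1) * p ^ t + 2) ∣ 2 * n * p ^ t) (hn' : n ∣ p ^ t - 1) : n = 1 := by
  by_contra hne
  have hn2 : 2 ≤ n := by omega
  set q := p ^ t with hq
  have hq2 : 2 ≤ q := by
    calc 2 ≤ p := hp.two_le
    _ ≤ p ^ t := Nat.le_self_pow (by omega) p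
  have hnq : n ≤ q - 1 := Nat.le_of_dvd (by omega) hn'
  have hq3 : 3 ≤ q := by omega
  set m := n * q with hm
  have hmq : 2 * q ≤ m := by
    calc 2 * q ≤ n * q := Nat.mul_le_mul_right q hn2
    _ = m := rfl
  have hd : (n - 1) * q + 2 = m - q + 2 := by
    rw [Nat.sub_one_mul]
  rw [hd] at hdvd
  have hdvd2 : (m - q + 2) ∣ 2 * m := by
    have : 2 * n * q = 2 * m := by ring
    rwa [this] at hdvd
  have key : (m - q + 2) ∣ 2 * q - 4 := by
    have h1 : (m - q + 2) ∣ 2 * (m - q + 2) := dvd_mul_left _ 2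
    have h2 := Nat.dvd_sub hdvd2 h1
    have : 2 * m - 2 * (m - q + 2) = 2 * q - 4 := by omega
    rwa [this] at h2
  have hle : m - q + 2 ≤ 2 * q - 4 := Nat.le_of_dvd (by omega) key
  have hn3 : n = 2 := by
    by_contra hn3
    have : 3 ≤ n := by omega
    have : 3 * q ≤ m := by
      calc 3 * q ≤ n * q := Nat.mul_le_mul_right q this
      _ = m := rfl
    omega
  have hmval : m = 2 * q := by rw [hm, hn3]
  rw [hmval] at key
  have hodd : 2 ∣ q - 1 := by rw [hn3] at hn'; exact hn'
  have h8 : (2 * q - q + 2) ∣ 8 := by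
    have h1 : (2 * q - q + 2) ∣ 2 * (2 * q - q + 2) := dvd_mul_left _ 2
    have h2 := Nat.dvd_sub h1 key
    have : 2 * (2 * q - q + 2) - (2 * q - 4) = 8 := by omega
    rwa [this] at h2
  have hle8 : 2 * q - q + 2 ≤ 8 := Nat.le_of_dvd (by norm_num) h8
  have h6 : q ≤ 6 := by omega
  clear_value q
  interval_cases q <;> omega
end

section
/- Let p > 2 be prime, A a local Artinian k-algebra (char k = p, residue field k), V ⊆ k a finite-dimensional F_p-subspace containing F_p, α ∈ m_A, and β: V → m_A an F_p-linear map. The following are equivalent: (i) there exists γ ∈ A with M̃_{α,β}(u)·M̃_{α,β}(v) = γ·M̃_{α,β}(u+v) for all u, v ∈ V; (ii) α^{(p-1)/2} = 0 and α·β = 0. Moreover, when these hold, γ = 1. -/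
open Finset

/-- The binomial coefficient polynomial `C(m, j) = m(m-1)⋯(m-j+1)/j!` evaluated at an
element `m` of a field (the relevant factorials being invertible in characteristic `p`
when `j < p`). -/
noncomputable def fieldChoose {K : Type*} [Field K] (m : K) (j : ℕ) : K :=
  (∏ i ∈ range j, (m - (i : K))) / (j.factorial : K)

/-- The truncated formal Chebyshev matrix `M̃_{α,β}(u) = M^{[N]}_{α,β}(u)`, with entries
`[[A(u), B(u)], [C(u) + β(u), D(u)]]` where `A(u) = Σ_{k=0}^N C(u+k-1,2k)α^k`,
`B(u) = α Σ_{k=0}^{N-1} C(u+k,2k+1)α^k`, `C(u) = Σ_{k=0}^{N-1} C(u+k,2k+1)α^k`,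
`D(u) = Σ_{k=0}^N C(u+k,2k)α^k`; the binomial coefficients are computed in `K` and
mapped into the `K`-algebra `A`; `βu` denotes the value `β(u) ∈ A`. -/
noncomputable def MtildeMat {K A : Type*} [Field K] [CommRing A] [Algebra K A]
    (N : ℕ) (α βu : A) (u : K) : Matrix (Fin 2) (Fin 2) A :=
  !![∑ k ∈ range (N + 1), algebraMap K A (fieldChoose (u + (k : K) - 1) (2 * k)) * α ^ k,
     α * ∑ k ∈ range N, algebraMap K A (fieldChoose (u + (k : K)) (2 * k + 1)) * α ^ k;
     (∑ k ∈ range N, algebraMap K A (fieldChoose (u + (k : K)) (2 * k + 1)) * α ^ k) + βu,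
     ∑ k ∈ range (N + 1), algebraMap K A (fieldChoose (u + (k : K)) (2 * k)) * α ^ k]



open Polynomial

section ChebyshevCore
variable {K : Type*} [Field K] {p : ℕ} [CharP K p]

lemma factorial_cast_ne_zero (hp : p.Prime) {j : ℕ} (hj : j < p) :
    ((j.factorial : K)) ≠ 0 := by
  rw [Ne, CharP.cast_eq_zero_iff K p]
  intro h
  exact absurd ((Nat.Prime.dvd_factorial hp).mp h) (by omega)

lemma fieldChoose_zero (m : K) : fieldChoose m 0 = 1 := by
  simp [fieldChoose]

lemma fieldChoose_pascal (hp : p.Prime) (m : K) (j : ℕ) (hj : j + 1 < p) :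
    fieldChoose m (j + 1) + fieldChoose m j = fieldChoose (m + 1) (j + 1) := by
  have h1 : ((j + 1).factorial : K) ≠ 0 := factorial_cast_ne_zero hp hj
  have h2 : ((j.factorial : K)) ≠ 0 := factorial_cast_ne_zero hp (by omega)
  have h3 : ∏ i ∈ range (j + 1), (m + 1 - (i : K)) = (m + 1) * ∏ i ∈ range j, (m - (i : K)) := by
    rw [Finset.prod_range_succ']
    have : ∀ i ∈ range j, (m + 1 - ((i + 1 : ℕ) : K)) = m - i := by
      intro i _; push_cast; ring
    rw [Finset.prod_congr rfl this]
    push_cast; ring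
  rw [fieldChoose, fieldChoose, fieldChoose, h3, Finset.prod_range_succ]
  have h4 : ((j + 1).factorial : K) = (j + 1) * (j.factorial : K) := by
    rw [Nat.factorial_succ]; push_cast; ring
  field_simp
  rw [h4]
  ring

lemma fieldChoose_natCast_eq_zero {l j : ℕ} (h : l < j) :
    fieldChoose ((l : K)) j = 0 := by
  rw [fieldChoose, Finset.prod_eq_zero (Finset.mem_range.mpr h) (by simp)]
  simp

lemma fieldChoose_natCast_self (hp : p.Prime) {n : ℕ} (hn : n < p) :
    fieldChoose ((n : K)) n = 1 := by
  have : ∏ i ∈ range n, ((n : K) - (i : K)) = (n.factorial : K) := by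
    have : ∀ i ∈ range n, ((n : K) - (i : K)) = ((n - i : ℕ) : K) := by
      intro i hi
      rw [Nat.cast_sub (le_of_lt (Finset.mem_range.mp hi))]
    rw [Finset.prod_congr rfl this, ← Nat.cast_prod]
    congr 1
    rw [← Finset.prod_range_reflect]
    have : ∀ j ∈ range n, (n - (n - 1 - j)) = j + 1 := by intro j hj; have := Finset.mem_range.mp hj; omega
    rw [Finset.prod_congr rfl this, Finset.prod_range_add_one_eq_factorial]
  rw [fieldChoose, this, div_self (factorial_cast_ne_zero hp hn)]


noncomputable def PC (N : ℕ) (u : K) : K[X] :=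
  ∑ k ∈ range N, C (fieldChoose (u + (k : K)) (2 * k + 1)) * X ^ k

noncomputable def PA (N : ℕ) (u : K) : K[X] :=
  ∑ k ∈ range (N + 1), C (fieldChoose (u + (k : K) - 1) (2 * k)) * X ^ k

noncomputable def Pmat (N : ℕ) (u : K) : Matrix (Fin 2) (Fin 2) K[X] :=
  !![PA N u, X * PC N u; PC N u, PA N (u + 1)]



-- K1
lemma PA_add_X_PC (hp : p.Prime) {N : ℕ} (hN : 2 * N + 1 = p) (u : K) :
    PA N u + X * PC N u = PA N (u + 1) := by
  rw [PA, PA, PC, Finset.mul_sum]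
  rw [Finset.sum_range_succ' (fun k => C (fieldChoose (u + (k : K) - 1) (2 * k)) * X ^ k) N,
      Finset.sum_range_succ' (fun k => C (fieldChoose (u + 1 + (k : K) - 1) (2 * k)) * X ^ k) N]
  simp only [Nat.cast_zero, mul_zero, pow_zero, mul_one]
  have h0 : fieldChoose (u + 0 - 1) 0 = fieldChoose (u + 1 + 0 - 1) 0 := by
    simp [fieldChoose]
  rw [add_right_comm, ← h0, add_left_inj]
  rw [← Finset.sum_add_distrib]
  apply Finset.sum_congr rfl
  intro k hk
  have hk' := Finset.mem_range.mp hk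
  have : X * (C (fieldChoose (u + (k : K)) (2 * k + 1)) * X ^ k)
      = C (fieldChoose (u + (k : K)) (2 * k + 1)) * X ^ (k + 1) := by ring
  rw [this, ← add_mul, ← C_add]
  congr 2
  have harg : u + ((k : ℕ) + 1 : ℕ) - 1 = u + (k : K) := by push_cast; ring
  have harg2 : u + 1 + ((k : ℕ) + 1 : ℕ) - 1 = (u + (k : K)) + 1 := by push_cast; ring
  have h2 : 2 * (k + 1) = (2 * k + 1) + 1 := by ring
  rw [harg, harg2, h2, ← fieldChoose_pascal hp (u + (k : K)) (2 * k + 1) (by omega)]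

-- K2
lemma PC_add_PA (hp : p.Prime) {N : ℕ} (hN : 2 * N + 1 = p) (u : K) :
    PC N u + PA N (u + 1) = PC N (u + 1) + C (fieldChoose (u + (N : K)) (2 * N)) * X ^ N := by
  rw [PC, PC, PA, Finset.sum_range_succ]
  have harg : u + 1 + (N : K) - 1 = u + (N : K) := by ring
  rw [harg, ← add_assoc, add_left_inj, ← Finset.sum_add_distrib]
  apply Finset.sum_congr rfl
  intro k hk
  have hk' := Finset.mem_range.mp hk
  rw [← add_mul, ← C_add]
  congr 2
  have harg2 : u + 1 + (k : K) - 1 = u + (k : K) := by ring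
  rw [harg2]
  have h3 : u + 1 + (k : K) = u + (k : K) + 1 := by ring
  rw [h3, ← fieldChoose_pascal (K := K) hp (u + (k : K)) (2 * k) (by omega)]



lemma PA_one (hp : p.Prime) {N : ℕ} (hN : 2 * N + 1 = p) : PA N (1 : K) = 1 := by
  rw [PA, Finset.sum_eq_single 0]
  · simp [fieldChoose_zero]
  · intro k _ hk
    have h1 : (1 : K) + (k : K) - 1 = ((k : ℕ) : K) := by push_cast; ring
    rw [h1, fieldChoose_natCast_eq_zero (by omega), map_zero, zero_mul]
  · intro h; simp at h

lemma PC_one (hp : p.Prime) {N : ℕ} (hN : 2 * N + 1 = p) : PC N (1 : K) = 1 := by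
  have hN1 : 0 < N := by have := hp.one_lt; omega
  rw [PC, Finset.sum_eq_single 0]
  · have h1 : (1 : K) + (0 : ℕ) = ((1 : ℕ) : K) := by push_cast; ring
    rw [h1, fieldChoose_natCast_self hp (by omega)]
    simp
  · intro k _ hk
    have h1 : (1 : K) + (k : K) = ((k + 1 : ℕ) : K) := by push_cast; ring
    rw [h1, fieldChoose_natCast_eq_zero (by omega), map_zero, zero_mul]
  · intro h; exact absurd (Finset.mem_range.mpr hN1) h

lemma PA_zero (hp : p.Prime) {N : ℕ} (hN : 2 * N + 1 = p) : PA N (0 : K) = 1 := by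
  rw [PA, Finset.sum_eq_single 0]
  · simp [fieldChoose_zero]
  · intro k _ hk
    have h1 : (0 : K) + (k : K) - 1 = ((k - 1 : ℕ) : K) := by
      rw [Nat.cast_sub (by omega)]; push_cast; ring
    rw [h1, fieldChoose_natCast_eq_zero (by omega), map_zero, zero_mul]
  · intro h; simp at h

lemma PC_zero (hp : p.Prime) {N : ℕ} (hN : 2 * N + 1 = p) : PC N (0 : K) = 0 := by
  rw [PC]
  apply Finset.sum_eq_zero
  intro k _
  have h1 : (0 : K) + (k : K) = ((k : ℕ) : K) := by push_cast; ring
  rw [h1, fieldChoose_natCast_eq_zero (by omega), map_zero, zero_mul]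

lemma Pmat_zero (hp : p.Prime) {N : ℕ} (hN : 2 * N + 1 = p) : Pmat N (0 : K) = 1 := by
  rw [Pmat, PA_zero hp hN, PC_zero hp hN]
  rw [show (0 : K) + 1 = 1 from by ring, PA_one hp hN]
  rw [Matrix.one_fin_two]
  simp

lemma Pmat_one (hp : p.Prime) {N : ℕ} (hN : 2 * N + 1 = p) :
    Pmat N (1 : K) = !![1, X; 1, 1 + X] := by
  rw [Pmat, PA_one hp hN, PC_one hp hN,
    ← PA_add_X_PC hp hN 1, PA_one hp hN, PC_one hp hN, mul_one]

def XCong (N : ℕ) (M M' : Matrix (Fin 2) (Fin 2) K[X]) : Prop :=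
  ∀ i j, (X : K[X]) ^ N ∣ (M - M') i j

lemma XCong.trans {N : ℕ} {M M' M'' : Matrix (Fin 2) (Fin 2) K[X]}
    (h : XCong N M M') (h' : XCong N M' M'') : XCong N M M'' := by
  intro i j
  have : (M - M'') i j = (M - M') i j + (M' - M'') i j := by simp
  rw [this]; exact dvd_add (h i j) (h' i j)

lemma XCong.symm {N : ℕ} {M M' : Matrix (Fin 2) (Fin 2) K[X]}
    (h : XCong N M M') : XCong N M' M := by
  intro i j
  have : (M' - M) i j = -((M - M') i j) := by simp
  rw [this]; exact dvd_neg.mpr (h i j)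

lemma XCong.mul_right {N : ℕ} {M M' T : Matrix (Fin 2) (Fin 2) K[X]}
    (h : XCong N M M') : XCong N (M * T) (M' * T) := by
  intro i j
  have : (M * T - M' * T) i j = ∑ j' : Fin 2, (M - M') i j' * T j' j := by
    simp [Matrix.sub_apply, Matrix.mul_apply, Matrix.sub_apply, ← Finset.sum_sub_distrib,
      sub_mul]
    ring
  rw [this]
  exact Finset.dvd_sum fun j' _ => dvd_mul_of_dvd_left (h i j') _
lemma XCong.mul_left {N : ℕ} {M M' T : Matrix (Fin 2) (Fin 2) K[X]}
    (h : XCong N M M') : XCong N (T * M) (T * M') := by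
  intro i j
  have : (T * M - T * M') i j = ∑ j' : Fin 2, T i j' * (M - M') j' j := by
    simp [Matrix.sub_apply, Matrix.mul_apply, ← Finset.sum_sub_distrib, mul_sub]
    ring
  rw [this]
  exact Finset.dvd_sum fun j' _ => Dvd.dvd.mul_left (h j' j) _

lemma Pmat_incr (hp : p.Prime) {N : ℕ} (hN : 2 * N + 1 = p) (u : K) :
    XCong N (Pmat N u * Pmat N 1) (Pmat N (u + 1)) := by
  have e1 := PA_add_X_PC hp hN u
  have e2 := PC_add_PA hp hN u
  have e1' := PA_add_X_PC hp hN (u + 1)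
  rw [Pmat_one hp hN]
  set h := fieldChoose (u + (N : K)) (2 * N) with hh
  intro i j
  rw [Pmat, Pmat, Matrix.mul_fin_two]
  fin_cases i <;> fin_cases j <;>
    simp only [Matrix.sub_apply, Fin.zero_eta, Fin.mk_one, Matrix.cons_val', Matrix.cons_val_zero,
      Matrix.cons_val_one, Matrix.head_cons, Matrix.head_fin_const, Matrix.empty_val',
      Matrix.cons_val_fin_one, Matrix.of_apply]
  · exact ⟨0, by linear_combination e1⟩
  · exact ⟨C h * X, by linear_combination X * e2 + X * e1⟩
  · exact ⟨C h, by linear_combination e2⟩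
  · exact ⟨C h * X, by linear_combination X * e2 + e1'⟩



lemma XCong.refl {N : ℕ} (M : Matrix (Fin 2) (Fin 2) K[X]) : XCong N M M := by
  intro i j; simp

lemma Pmat_nat (hp : p.Prime) {N : ℕ} (hN : 2 * N + 1 = p) (u : K) (m : ℕ) :
    XCong N (Pmat N u * Pmat N ((m : ℕ) : K)) (Pmat N (u + m)) := by
  induction m with
  | zero => simpa [Pmat_zero hp hN] using XCong.refl (K := K) (N := N) (Pmat N u)
  | succ m ih =>
    have hc : (((m + 1 : ℕ)) : K) = ((m : ℕ) : K) + 1 := by push_cast; ring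
    rw [hc]
    have h1 : XCong N (Pmat N ((m : ℕ) : K) * Pmat N 1) (Pmat N ((m : K) + 1)) :=
      Pmat_incr hp hN _
    have h2 : XCong N (Pmat N u * Pmat N ((m : K) + 1))
        (Pmat N u * (Pmat N ((m : ℕ) : K) * Pmat N 1)) :=
      XCong.mul_left (XCong.symm h1)
    have h3 : XCong N (Pmat N u * (Pmat N ((m : ℕ) : K) * Pmat N 1))
        ((Pmat N (u + m)) * Pmat N 1) := by
      rw [← mul_assoc]
      exact XCong.mul_right ih
    have h4 : XCong N ((Pmat N (u + m)) * Pmat N 1) (Pmat N (u + m + 1)) :=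
      Pmat_incr hp hN _
    have := (h2.trans h3).trans h4
    rwa [show u + (m : K) + 1 = u + ((m : K) + 1) from by ring] at this



noncomputable def chP (t : K) (j : ℕ) : K[X] :=
  C ((j.factorial : K)⁻¹) * ∏ i ∈ range j, (X + C (t - (i : K)))

lemma eval_chP (t : K) (j : ℕ) (v : K) : eval v (chP t j) = fieldChoose (v + t) j := by
  rw [chP, fieldChoose, eval_mul, eval_C, eval_prod, div_eq_mul_inv, mul_comm]
  congr 1
  apply Finset.prod_congr rfl
  intro i _
  rw [eval_add, eval_X, eval_C]
  ring

lemma natDegree_chP (t : K) (j : ℕ) : (chP t j).natDegree ≤ j := by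
  rw [chP]
  refine le_trans (natDegree_C_mul_le _ _) ?_
  refine le_trans (natDegree_prod_le _ _) ?_
  refine le_trans (Finset.sum_le_sum fun i (_ : i ∈ range j) =>
    le_of_eq (natDegree_X_add_C (t - (i : K)))) ?_
  simp

noncomputable def cpMat (N : ℕ) (s : K) (k : ℕ) : Matrix (Fin 2) (Fin 2) K[X] :=
  !![if k ≤ N then chP (s + (k : K) - 1) (2 * k) else 0,
     if h : k = 0 then 0 else if k ≤ N then chP (s + ((k - 1 : ℕ) : K)) (2 * (k - 1) + 1) else 0;
     if k < N then chP (s + (k : K)) (2 * k + 1) else 0,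
     if k ≤ N then chP (s + (k : K)) (2 * k) else 0]

lemma coeff_sum_CXpow (f : ℕ → K) (M k : ℕ) :
    (∑ k' ∈ range M, C (f k') * X ^ k').coeff k = if k < M then f k else 0 := by
  rw [finset_sum_coeff]
  simp only [coeff_C_mul, coeff_X_pow, mul_ite, mul_one, mul_zero]
  simp only [Finset.sum_ite_eq, Finset.mem_range]

lemma natDegree_cpMat (N : ℕ) (s : K) (k : ℕ) (i j : Fin 2) :
    (cpMat N s k i j).natDegree ≤ 2 * k + 1 := by
  fin_cases i <;> fin_cases j <;>
    simp only [cpMat, Matrix.cons_val', Matrix.cons_val_zero, Matrix.cons_val_one,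
      Matrix.head_cons, Matrix.head_fin_const, Matrix.empty_val', Matrix.cons_val_fin_one,
      Fin.zero_eta, Fin.mk_one, Matrix.of_apply]
  · split
    · exact (natDegree_chP _ _).trans (by omega : 2 * k ≤ 2 * k + 1)
    · simp
  · split
    · simp
    · split
      · exact (natDegree_chP _ _).trans (by omega : 2 * (k - 1) + 1 ≤ 2 * k + 1)
      · simp
  · split
    · exact le_of_eq rfl |>.trans (natDegree_chP _ _)
    · simp
  · split
    · exact (natDegree_chP _ _).trans (by omega : 2 * k ≤ 2 * k + 1)
    · simp

lemma eval_cpMat (N : ℕ) (s : K) (k : ℕ) (i j : Fin 2) (v : K) :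
    eval v (cpMat N s k i j) = (Pmat N (s + v) i j).coeff k := by
  fin_cases i <;> fin_cases j <;>
    simp only [cpMat, Pmat, Matrix.cons_val', Matrix.cons_val_zero, Matrix.cons_val_one,
      Matrix.head_cons, Matrix.head_fin_const, Matrix.empty_val', Matrix.cons_val_fin_one,
      Fin.zero_eta, Fin.mk_one, Matrix.of_apply]
  · rw [PA, coeff_sum_CXpow (fun k => fieldChoose (s + v + (k : K) - 1) (2 * k)) (N + 1) k]
    split
    · rename_i h
      rw [if_pos (by omega : k < N + 1), eval_chP]
      congr 1
      ring
    · rename_i h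
      rw [if_neg (by omega), eval_zero]
  · rcases Nat.eq_zero_or_pos k with hk | hk
    · subst hk
      simp [mul_comm X (PC N (s + v)), coeff_mul_X_zero]
    · obtain ⟨k', rfl⟩ : ∃ k', k = k' + 1 := ⟨k - 1, by omega⟩
      rw [mul_comm X (PC N (s + v)), coeff_mul_X, PC,
        coeff_sum_CXpow (fun k => fieldChoose (s + v + (k : K)) (2 * k + 1)) N k']
      rw [dif_neg (by omega : ¬ k' + 1 = 0)]
      split
      · rename_i h
        rw [if_pos (by omega : k' < N), eval_chP]
        have : k' + 1 - 1 = k' := by omega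
        rw [this]
        congr 1
        ring
      · rename_i h
        rw [if_neg (by omega), eval_zero]
  · rw [PC, coeff_sum_CXpow (fun k => fieldChoose (s + v + (k : K)) (2 * k + 1)) N k]
    split
    · rw [eval_chP]
      congr 1
      ring
    · simp
  · rw [PA, coeff_sum_CXpow (fun k => fieldChoose (s + v + 1 + (k : K) - 1) (2 * k)) (N + 1) k]
    split
    · rename_i h
      rw [if_pos (by omega : k < N + 1), eval_chP]
      congr 1
      ring
    · rename_i h
      rw [if_neg (by omega), eval_zero]


lemma Pmat_mul (hp : p.Prime) {N : ℕ} (hN : 2 * N + 1 = p) (u v : K) :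
    XCong N (Pmat N u * Pmat N v) (Pmat N (u + v)) := by
  classical
  intro i j
  rw [Matrix.sub_apply, X_pow_dvd_iff]
  intro n hn
  rw [coeff_sub, sub_eq_zero]
  -- the interpolating polynomial
  set Φ : K[X] := (∑ j' : Fin 2, ∑ l ∈ range (n + 1),
      C ((Pmat N u i j').coeff l) * cpMat N 0 (n - l) j' j) - cpMat N u n i j with hΦ
  have key : ∀ w : K, eval w Φ =
      ((Pmat N u * Pmat N w) i j).coeff n - (Pmat N (u + w) i j).coeff n := by
    intro w
    rw [hΦ, eval_sub, eval_finset_sum, eval_cpMat]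
    congr 1
    have hmul : ((Pmat N u * Pmat N w) i j).coeff n =
        ∑ j' : Fin 2, ∑ l ∈ range (n + 1),
          (Pmat N u i j').coeff l * (Pmat N w j' j).coeff (n - l) := by
      rw [Matrix.mul_apply, finset_sum_coeff]
      apply Finset.sum_congr rfl
      intro j' _
      rw [coeff_mul, Finset.Nat.sum_antidiagonal_eq_sum_range_succ_mk]
    rw [hmul]
    apply Finset.sum_congr rfl
    intro j' _
    rw [eval_finset_sum]
    apply Finset.sum_congr rfl
    intro l _
    rw [eval_mul, eval_C, eval_cpMat, zero_add]
  have hdeg : Φ.natDegree ≤ 2 * N - 1 := by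
    have h1 : ∀ j' : Fin 2, (∑ l ∈ range (n + 1),
        C ((Pmat N u i j').coeff l) * cpMat N 0 (n - l) j' j).natDegree ≤ 2 * N - 1 := by
      intro j'
      refine le_trans (natDegree_sum_le _ _) ?_
      rw [Finset.fold_max_le]
      constructor
      · omega
      · intro l _
        refine le_trans (natDegree_C_mul_le _ _) (le_trans (natDegree_cpMat _ _ _ _ _) ?_)
        omega
    refine le_trans (natDegree_sub_le _ _) (max_le ?_ ?_)
    · refine le_trans (natDegree_sum_le _ _) ?_
      rw [Finset.fold_max_le]
      exact ⟨by omega, fun j' _ => h1 j'⟩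
    · exact le_trans (natDegree_cpMat _ _ _ _ _) (by omega)
  have hroot : ∀ m : ℕ, eval ((m : ℕ) : K) Φ = 0 := by
    intro m
    rw [key]
    have := Pmat_nat hp hN u m i j
    rw [X_pow_dvd_iff] at this
    have h0 := this n hn
    rw [Matrix.sub_apply, coeff_sub, sub_eq_zero] at h0
    exact sub_eq_zero.mpr h0
  have hΦ0 : Φ = 0 := by
    by_contra hne
    have hS : ((range p).image (fun m : ℕ => (m : K))).card = p := by
      rw [Finset.card_image_of_injOn, Finset.card_range]
      have := CharP.natCast_injOn_Iio K p
      intro a ha b hb hab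
      exact this (by simpa using Finset.mem_range.mp (by simpa using ha))
        (by simpa using Finset.mem_range.mp (by simpa using hb)) hab
    have hsub : (range p).image (fun m : ℕ => (m : K)) ⊆ Φ.roots.toFinset := by
      intro x hx
      obtain ⟨m, _, rfl⟩ := Finset.mem_image.mp hx
      rw [Multiset.mem_toFinset, mem_roots hne]
      exact hroot m
    have := Finset.card_le_card hsub
    have h2 := Multiset.toFinset_card_le Φ.roots
    have h3 := Polynomial.card_roots' Φ
    have hp3 : 3 ≤ p := by omega
    omega
  rw [← sub_eq_zero, ← key v, hΦ0, eval_zero]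


section Aside
variable {K : Type*} [Field K] {A : Type*} [CommRing A] [Algebra K A] (α : A)

lemma MtildeMat_eq (N : ℕ) (b : A) (u : K) :
    MtildeMat N α b u =
      !![aeval α (PA N u), aeval α (X * PC N u);
         aeval α (PC N u) + b, aeval α (PA N (u + 1))] := by
  have hA : ∀ w : K, aeval α (PA N w) =
      ∑ k ∈ range (N + 1), algebraMap K A (fieldChoose (w + (k : K) - 1) (2 * k)) * α ^ k := by
    intro w
    rw [PA, map_sum]
    exact Finset.sum_congr rfl fun k _ => by rw [map_mul, aeval_C, map_pow, aeval_X]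
  have hC : ∀ w : K, aeval α (PC N w) =
      ∑ k ∈ range N, algebraMap K A (fieldChoose (w + (k : K)) (2 * k + 1)) * α ^ k := by
    intro w
    rw [PC, map_sum]
    exact Finset.sum_congr rfl fun k _ => by rw [map_mul, aeval_C, map_pow, aeval_X]
  rw [MtildeMat, hA, hA, hC, map_mul, aeval_X, hC]
  simp only [show ∀ k : ℕ, u + 1 + (k : K) - 1 = u + k from fun k => by ring]

lemma PA_one_add (N : ℕ) (u : K) :
    ∃ q : K[X], PA N u = 1 + X * q := by
  refine ⟨∑ k ∈ range N, C (fieldChoose (u + ((k + 1 : ℕ) : K) - 1) (2 * (k + 1))) * X ^ k, ?_⟩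
  rw [PA, Finset.sum_range_succ' (fun k => C (fieldChoose (u + (k : K) - 1) (2 * k)) * X ^ k) N]
  rw [Finset.mul_sum]
  simp only [Nat.cast_zero, mul_zero, pow_zero, mul_one, fieldChoose_zero, map_one]
  rw [add_comm]
  congr 1
  apply Finset.sum_congr rfl
  intro k _
  ring

lemma mul_aeval_PA_of_ann (N : ℕ) {b : A} (hb : α * b = 0) (u : K) :
    b * aeval α (PA N u) = b := by
  obtain ⟨q, hq⟩ := PA_one_add N u
  rw [hq, map_add, map_one, map_mul, aeval_X, mul_add, mul_one]
  have : b * (α * aeval α q) = (α * b) * aeval α q := by ring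
  rw [this, hb, zero_mul, add_zero]

lemma mul_aeval_XPC_of_ann (N : ℕ) {b : A} (hb : α * b = 0) (u : K) :
    b * aeval α (X * PC N u) = 0 := by
  rw [map_mul, aeval_X]
  have : b * (α * aeval α (PC N u)) = (α * b) * aeval α (PC N u) := by ring
  rw [this, hb, zero_mul]

variable {p : ℕ} [CharP K p]

lemma MtildeMat_groupLaw (hp : p.Prime) {N : ℕ} (hN : 2 * N + 1 = p)
    (hα : α ^ N = 0) {b b' : A} (hb : α * b = 0) (hb' : α * b' = 0) (u v : K) :
    MtildeMat N α b u * MtildeMat N α b' v = MtildeMat N α (b + b') (u + v) := by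
  have hent : ∀ i j, aeval α ((Pmat N u * Pmat N v) i j) = aeval α (Pmat N (u + v) i j) := by
    intro i j
    obtain ⟨q, hq⟩ := Pmat_mul hp hN u v i j
    rw [Matrix.sub_apply, sub_eq_iff_eq_add] at hq
    rw [hq, map_add, map_mul, map_pow, aeval_X, hα, zero_mul, zero_add]
  have hmul : ∀ i j, (Pmat N u * Pmat N v) i j =
      Pmat N u i 0 * Pmat N v 0 j + Pmat N u i 1 * Pmat N v 1 j := by
    intro i j
    rw [Matrix.mul_apply, Fin.sum_univ_two]
  rw [MtildeMat_eq, MtildeMat_eq, MtildeMat_eq, Matrix.mul_fin_two]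
  have e00 := hent 0 0
  have e01 := hent 0 1
  have e10 := hent 1 0
  have e11 := hent 1 1
  rw [hmul] at e00 e01 e10 e11
  simp only [Pmat, Matrix.cons_val', Matrix.cons_val_zero, Matrix.cons_val_one,
    Matrix.head_cons, Matrix.head_fin_const, Matrix.empty_val', Matrix.cons_val_fin_one,
    Matrix.of_apply, map_add, map_mul] at e00 e01 e10 e11
  ext i j
  have hbA := mul_aeval_PA_of_ann α N hb v
  have hb'A := mul_aeval_PA_of_ann α N hb' (u + 1)
  simp only [map_mul, aeval_X] at e00 e01 e10 e11 ⊢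
  fin_cases i <;> fin_cases j <;>
    simp only [Matrix.cons_val', Matrix.cons_val_zero, Matrix.cons_val_one, Matrix.head_cons,
      Matrix.head_fin_const, Matrix.empty_val', Matrix.cons_val_fin_one, Fin.zero_eta,
      Fin.mk_one, Matrix.of_apply, map_mul, aeval_X]
  · linear_combination e00 + aeval α (PC N u) * hb'
  · linear_combination e01
  · linear_combination e10 + hbA + hb'A
  · linear_combination e11 + aeval α (PC N v) * hb
end Aside


section Fwd
variable {K : Type*} [Field K] {p : ℕ} [CharP K p] [Algebra (ZMod p) K]
variable {A : Type*} [CommRing A] [Algebra K A]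

lemma forward_direction (hp : p.Prime) (hp2 : 2 < p) {N : ℕ} (hN : 2 * N + 1 = p)
    {α : A} (hαn : IsNilpotent α)
    (V : Submodule (ZMod p) K) (hV : (1 : K) ∈ V) (β : V →+ A)
    (hβn : ∀ u : V, IsNilpotent (β u))
    (H : ∀ u v : V, ∃ γ : A,
        MtildeMat N α (β u) (u : K) * MtildeMat N α (β v) (v : K) =
          γ • MtildeMat N α (β (u + v)) ((u : K) + (v : K))) :
    α ^ N = 0 ∧ ∀ u : V, α * β u = 0 := by
  classical
  set one : V := ⟨1, hV⟩ with hone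
  have hone1 : ((one : V) : K) = 1 := rfl
  have hφK1 : ∀ x : K, aeval α (PA N x) + α * aeval α (PC N x) = aeval α (PA N (x + 1)) := by
    intro x
    rw [← PA_add_X_PC hp hN x, map_add, map_mul, aeval_X]
  have hφK2 : ∀ x : K, aeval α (PC N x) + aeval α (PA N (x + 1)) =
      aeval α (PC N (x + 1)) + algebraMap K A (fieldChoose (x + (N : K)) (2 * N)) * α ^ N := by
    intro x
    have := congrArg (aeval α) (PC_add_PA hp hN x)
    rw [map_add, map_add, map_mul, map_pow, aeval_C, aeval_X] at this
    exact this
  have hA1 : aeval α (PA N (1 : K)) = 1 := by rw [PA_one hp hN, map_one]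
  have hC1 : aeval α (PC N (1 : K)) = 1 := by rw [PC_one hp hN, map_one]
  have hA2 : aeval α (PA N ((1 : K) + 1)) = 1 + α := by
    rw [← hφK1 1, hA1, hC1, mul_one]
  have hAunit : ∀ x : K, IsUnit (aeval α (PA N x)) := by
    intro x
    obtain ⟨q, hq⟩ := PA_one_add N x
    rw [hq, map_add, map_one, map_mul, aeval_X]
    exact IsNilpotent.isUnit_one_add ((Commute.all _ _).isNilpotent_mul_right hαn)
  have hAsub : ∀ x : K, ∃ q : A, aeval α (PA N x) = 1 + α * q := by
    intro x
    obtain ⟨q, hq⟩ := PA_one_add N x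
    exact ⟨aeval α q, by rw [hq, map_add, map_one, map_mul, aeval_X]⟩
  -- the key relation at (w, 1)
  have key : ∀ w : V, ∃ γ : A,
      (aeval α (PA N (w : K)) + α * aeval α (PC N (w : K)) * (1 + β one) = γ * aeval α (PA N ((w : K) + 1))) ∧
      (aeval α (PC N (w : K)) + β w + aeval α (PA N ((w : K) + 1)) * (1 + β one)
        = γ * (aeval α (PC N ((w : K) + 1)) + (β w + β one))) ∧
      ((aeval α (PC N (w : K)) + β w) * α + aeval α (PA N ((w : K) + 1)) * (1 + α) = γ * aeval α (PA N ((w : K) + 1 + 1))) := by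
    intro w
    obtain ⟨γ, hγ⟩ := H w one
    rw [hone1] at hγ
    have hco : β (w + one) = β w + β one := map_add β w one
    rw [MtildeMat_eq, MtildeMat_eq, MtildeMat_eq, PA_one hp hN, PC_one hp hN, hco] at hγ
    simp only [map_one, map_mul, aeval_X, mul_one] at hγ
    rw [Matrix.mul_fin_two] at hγ
    refine ⟨γ, ?_, ?_, ?_⟩
    · have := congrFun (congrFun hγ 0) 0
      simpa [Matrix.smul_apply, smul_eq_mul, map_mul, aeval_X, mul_comm,
        mul_assoc, mul_left_comm] using this
    · have := congrFun (congrFun hγ 1) 0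
      simpa [Matrix.smul_apply, smul_eq_mul, map_mul, aeval_X, add_assoc] using this
    · have := congrFun (congrFun hγ 1) 1
      simpa [Matrix.smul_apply, smul_eq_mul, map_mul, aeval_X, hA2] using this
  -- Q_w relation
  have Q : ∀ w : V,
      algebraMap K A (fieldChoose ((w : K) + (N : K)) (2 * N)) * α ^ N * aeval α (PA N ((w : K) + 1))
        = β one * (α * aeval α (PC N (w : K)) * (aeval α (PC N ((w : K) + 1)) + (β w + β one))
            - (aeval α (PA N ((w : K) + 1)) - 1) * aeval α (PA N ((w : K) + 1))) := by
    intro w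
    obtain ⟨γ, e00, e10, _⟩ := key w
    have E1 := hφK1 (w : K)
    have E3 := hφK2 (w : K)
    linear_combination (aeval α (PA N ((w : K) + 1))) * e10 - (aeval α (PC N ((w : K) + 1)) + (β w + β one)) * e00
      + (aeval α (PC N ((w : K) + 1)) + (β w + β one)) * E1 - (aeval α (PA N ((w : K) + 1))) * E3

  -- value lemmas for the error coefficient
  have h2N : ((N : K) + (N : K)) = ((2 * N : ℕ) : K) := by push_cast; ring
  have hhN : algebraMap K A (fieldChoose ((N : K) + (N : K)) (2 * N)) = 1 := by
    rw [h2N, fieldChoose_natCast_self hp (by omega), map_one]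
  -- main dichotomy
  have main : α ^ N = 0 ∧ α * β one = 0 := by
    by_cases hN1 : N = 1
    · -- p = 3
      subst hN1
      have hh1 : algebraMap K A (fieldChoose ((1 : K) + ((1 : ℕ) : K)) (2 * 1)) = 1 := by
        rw [show (1 : K) + ((1 : ℕ) : K) = ((2 : ℕ) : K) from by push_cast; ring,
          show (2 * 1 : ℕ) = 2 from by norm_num,
          fieldChoose_natCast_self hp (by omega), map_one]
      have hCa2 : aeval α (PC 1 ((1 : K) + 1)) = 2 := by
        linear_combination - hφK2 (1 : K) + hC1 + hA2 - α ^ 1 * hh1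
      have Q1 := Q one
      simp only [hone1] at Q1
      rw [hh1, hC1, hA2, hCa2] at Q1
      have hc : IsNilpotent (β one * (1 + 2 * β one - α) - α) := by
        refine (Commute.all _ _).isNilpotent_sub ?_ hαn
        exact (Commute.all _ _).isNilpotent_mul_right (hβn one)
      have h1 : α * (1 - (β one * (1 + 2 * β one - α) - α)) = 0 := by
        linear_combination Q1
      have hu : IsUnit (1 - (β one * (1 + 2 * β one - α) - α)) := by
        have := IsNilpotent.isUnit_one_add hc.neg
        rwa [← sub_eq_add_neg] at this
      have hα0 : α = 0 := (IsUnit.mul_left_eq_zero hu).mp h1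
      exact ⟨by rw [pow_one]; exact hα0, by rw [hα0, zero_mul]⟩
    · -- p ≥ 5, so N ≥ 2
      have hN2 : 2 ≤ N := by
        rcases Nat.lt_or_ge N 2 with h | h
        · interval_cases N
          · omega
          · omega
        · exact h
      have hh1 : algebraMap K A (fieldChoose ((1 : K) + (N : K)) (2 * N)) = 0 := by
        rw [show (1 : K) + (N : K) = ((N + 1 : ℕ) : K) from by push_cast; ring,
          fieldChoose_natCast_eq_zero (by omega), map_zero]
      have hCa2 : aeval α (PC N ((1 : K) + 1)) = 2 + α := by
        linear_combination - hφK2 (1 : K) + hC1 + hA2 - α ^ N * hh1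
      have Q1 := Q one
      simp only [hone1] at Q1
      rw [hh1, hC1, hA2, hCa2] at Q1
      have hz : α * β one * (1 + 2 * β one) = 0 := by linear_combination - Q1
      have hu : IsUnit (1 + 2 * β one) :=
        IsNilpotent.isUnit_one_add ((Commute.all _ _).isNilpotent_mul_left (hβn one))
      have hαβ1 : α * β one = 0 := (IsUnit.mul_left_eq_zero hu).mp hz
      -- now kill α ^ N
      have hNmem : ((N : ℕ) : K) ∈ V := by
        have h := V.smul_mem ((N : ℕ) : ZMod p) hV
        rwa [Algebra.smul_def, map_natCast, mul_one] at h
      have QN := Q ⟨((N : ℕ) : K), hNmem⟩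
      simp only [show ((((⟨((N : ℕ) : K), hNmem⟩ : V)) : V) : K) = ((N : ℕ) : K) from rfl,
        hhN] at QN
      obtain ⟨q, hq⟩ := hAsub ((N : K) + 1)
      have hRHS : β one * (α * aeval α (PC N (N : K))
          * (aeval α (PC N ((N : K) + 1)) + (β ⟨((N : ℕ) : K), hNmem⟩ + β one))
          - (aeval α (PA N ((N : K) + 1)) - 1) * aeval α (PA N ((N : K) + 1))) = 0 := by
        linear_combination (aeval α (PC N (N : K))
            * (aeval α (PC N ((N : K) + 1)) + (β ⟨((N : ℕ) : K), hNmem⟩ + β one))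
            - q * aeval α (PA N ((N : K) + 1))) * hαβ1
          - (β one * aeval α (PA N ((N : K) + 1))) * hq
      have hz2 : α ^ N * aeval α (PA N ((N : K) + 1)) = 0 := by
        linear_combination QN + hRHS
      exact ⟨(IsUnit.mul_left_eq_zero (hAunit _)).mp hz2, hαβ1⟩
  obtain ⟨hαN, hαβ1⟩ := main
  refine ⟨hαN, fun u => ?_⟩
  obtain ⟨γ, e00, _, e11⟩ := key u
  have hg0 : (γ - 1) * aeval α (PA N ((u : K) + 1)) = 0 := by
    linear_combination - e00 + hφK1 (u : K) + aeval α (PC N (u : K)) * hαβ1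
  have hγ1 : γ = 1 := by
    have := (IsUnit.mul_left_eq_zero (hAunit ((u : K) + 1))).mp hg0
    linear_combination this
  rw [hγ1, one_mul] at e11
  linear_combination e11 - hφK1 ((u : K) + 1) - α * hφK2 (u : K)
    - (algebraMap K A (fieldChoose ((u : K) + (N : K)) (2 * N)) * α) * hαN
end Fwd


end ChebyshevCore

/-- Let `p > 2` be prime, `A` a local Artinian algebra over a field `K` of characteristic
`p` with residue field `K`, `V ⊆ K` a finite-dimensional `F_p`-subspace containing `F_p`
(i.e. containing `1`), `α ∈ m_A`, and `β : V → m_A` an `F_p`-linear (equivalently,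
additive) map. Writing `M̃_{α,β}(u) = M_{α,β}^{[(p-1)/2]}(u)` for the truncated formal
Chebyshev matrix, the following are equivalent:
(i) for all `u, v ∈ V` there is `γ ∈ A` with `M̃_{α,β}(u)·M̃_{α,β}(v) = γ·M̃_{α,β}(u+v)`;
(ii) `α^{(p-1)/2} = 0` and `α·β = 0`.
Moreover, when these hold, the relation holds with `γ = 1`. -/
theorem mtilde_group_law_iff_obstruction (p : ℕ) (hp : p.Prime) (hp2 : 2 < p)
    (K : Type*) [Field K] [CharP K p] [Algebra (ZMod p) K]
    (A : Type*) [CommRing A] [IsLocalRing A] [IsArtinianRing A] [Algebra K A]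
    (hres : Function.Bijective ((IsLocalRing.residue A).comp (algebraMap K A)))
    (V : Submodule (ZMod p) K) [Module.Finite (ZMod p) V] (hV : (1 : K) ∈ V)
    (α : A) (hα : α ∈ IsLocalRing.maximalIdeal A)
    (β : V →+ A) (hβ : ∀ u : V, β u ∈ IsLocalRing.maximalIdeal A) :
    ((∀ u v : V, ∃ γ : A,
        MtildeMat ((p - 1) / 2) α (β u) (u : K) * MtildeMat ((p - 1) / 2) α (β v) (v : K) =
          γ • MtildeMat ((p - 1) / 2) α (β (u + v)) ((u : K) + (v : K))) ↔
      (α ^ ((p - 1) / 2) = 0 ∧ ∀ u : V, α * β u = 0)) ∧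
    ((α ^ ((p - 1) / 2) = 0 ∧ ∀ u : V, α * β u = 0) →
      ∀ u v : V,
        MtildeMat ((p - 1) / 2) α (β u) (u : K) * MtildeMat ((p - 1) / 2) α (β v) (v : K) =
          MtildeMat ((p - 1) / 2) α (β (u + v)) ((u : K) + (v : K))) := by
  have hodd : p % 2 = 1 := Nat.odd_iff.mp (hp.odd_of_ne_two (by omega))
  set N : ℕ := (p - 1) / 2 with hNdef
  have hN : 2 * N + 1 = p := by omega
  -- nilpotency of the maximal ideal
  have hmax : IsNilpotent (IsLocalRing.maximalIdeal A) := by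
    rw [← IsLocalRing.jacobson_eq_maximalIdeal (⊥ : Ideal A) bot_ne_top]
    exact IsArtinianRing.isNilpotent_jacobson_bot
  obtain ⟨n, hn⟩ := hmax
  have hnil : ∀ x : A, x ∈ IsLocalRing.maximalIdeal A → IsNilpotent x := by
    intro x hx
    exact ⟨n, by
      have := Ideal.pow_mem_pow hx n
      rw [hn] at this
      simpa using this⟩
  have hgl : (α ^ N = 0 ∧ ∀ u : V, α * β u = 0) →
      ∀ u v : V,
        MtildeMat N α (β u) (u : K) * MtildeMat N α (β v) (v : K) =
          MtildeMat N α (β (u + v)) ((u : K) + (v : K)) := by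
    rintro ⟨h1, h2⟩ u v
    rw [map_add β u v]
    exact MtildeMat_groupLaw α hp hN h1 (h2 u) (h2 v) (u : K) (v : K)
  constructor
  · constructor
    · intro H
      exact forward_direction hp hp2 hN (hnil α hα) V hV β (fun u => hnil _ (hβ u)) H
    · intro h u v
      exact ⟨1, by rw [one_smul]; exact hgl h u v⟩
  · exact hgl
end
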